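/- Let ℓ² denote the Hilbert space of square-summable complex sequences indexed by the non-negative integers, and let S : ℓ² → ℓ² be the shift operator, S(w_0, w_1, w_2, …) = (0, w_0, w_1, w_2, …). A closed subspace M of ℓ² with M ≠ {0} and M ≠ ℓ² satisfies S(M) ⊆ M if and only if there exists a sequence (λ_n)_{n≥0} ∈ M satisfying condition (c) — i.e. for every square-summable complex sequence (a_n)_{n≥0}, ∑_{n=0}^∞ |∑_{j=0}^n a_j λ_{n-j}|² = ∑_{n=0}^∞ |a_n|² — such that M is exactly the set of sequences of the form (∑_{k=0}^n λ_k c_{n-k})_{n=0}^∞ with (c_n)_{n≥0} ∈ ℓ². -/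

import Mathlib

/-- Condition (c): for every square-summable complex sequence `a`, the
Cauchy product of `a` with `l` has the same `ℓ²` sum as `a`. -/
def ConditionC (l : ℕ → ℂ) : Prop :=
  ∀ a : ℕ → ℂ, Summable (fun n => ‖a n‖ ^ 2) →
    ∑' n : ℕ, ‖∑ j ∈ Finset.range (n + 1), a j * l (n - j)‖ ^ 2 = ∑' n : ℕ, ‖a n‖ ^ 2

/-- The underlying function of the shift: `(w₀, w₁, …) ↦ (0, w₀, w₁, …)`. -/
def shiftSeq (w : ℕ → ℂ) : ℕ → ℂ
  | 0 => 0
  | n + 1 => w n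

theorem shiftSeq_memℓp (w : lp (fun _ : ℕ => ℂ) 2) : Memℓp (shiftSeq ⇑w) 2 := by
  apply memℓp_gen
  have hw : Summable fun n : ℕ => ‖w n‖ ^ (2 : ENNReal).toReal :=
    (memℓp_gen_iff (by norm_num)).1 (lp.memℓp w)
  exact (summable_nat_add_iff 1).mp hw

/-- The shift operator `S` on `ℓ²`: `S(w₀, w₁, w₂, …) = (0, w₀, w₁, w₂, …)`. -/
def shiftL2 (w : lp (fun _ : ℕ => ℂ) 2) : lp (fun _ : ℕ => ℂ) 2 :=
  ⟨shiftSeq ⇑w, shiftSeq_memℓp w⟩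


/-!
If `M` is closed, nonzero and shift-invariant, then `S M ≠ M`, since otherwise every `w ∈ M`
would be `Sᵏ⁺¹ y` and so vanish in coordinate `k`. A unit vector `l ∈ M ⊖ S M` has orthonormal
shifts `Sⁿ l`, so `c ↦ ∑ cₙ Sⁿ l`, whose coordinates are the Cauchy products of `l` and `c`, is an
isometry into `M`; this is condition (c). It is onto `M`: for `w ∈ M` the remainder
`v = w - ∑ ⟪Sⁿ l, w⟫ Sⁿ l` lies in `M`, so `v ⊥ Sⁿ l` for all `n` and `l ⊥ Sʲ v` for `j ≥ 1`.
Extended by zero to `ℤ`, this says that `v` is orthogonal to every translate of `l`, and these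
translates are orthonormal in `ℓ²(ℤ)`. The isometry `c ↦ ∑ c_g τ_g l` sends the reflected conjugate
of `v` to the correlation sequence of `v` and `l`, which is zero, hence `v = 0`. Conversely, the
shift commutes with Cauchy multiplication.
-/

open scoped lp

section

variable {ι κ E : Type*} [NormedAddCommGroup E]

theorem memℓp_two_iff {f : ι → E} : Memℓp f 2 ↔ Summable fun i => ‖f i‖ ^ 2 := by
  rw [memℓp_gen_iff (by norm_num)]
  norm_num

theorem norm_sq_extend_zero {e : κ → ι} (f : κ → E) :
    (fun i => ‖Function.extend e f 0 i‖ ^ 2) = Function.extend e (fun k => ‖f k‖ ^ 2) 0 := by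
  funext i
  rw [Function.apply_extend (fun x : E => ‖x‖ ^ 2)]
  congr 1
  funext i
  simp

end

namespace lp

section

variable {ι κ 𝕜 E : Type*} [NormedAddCommGroup E]

theorem norm_sq_eq_tsum (f : ℓ²(ι, E)) : ‖f‖ ^ 2 = ∑' i, ‖f i‖ ^ 2 := by
  simpa using lp.norm_rpow_eq_tsum (p := 2) (by norm_num) f

variable [NormedField 𝕜] [NormedSpace 𝕜 E]

noncomputable def compEquiv (e : κ ≃ ι) : ℓ²(ι, E) →ₗᵢ[𝕜] ℓ²(κ, E) where
  toFun f := ⟨f ∘ e, memℓp_two_iff.2 <| (e.summable_iff (f := fun i => ‖f i‖ ^ 2)).2 <|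
    memℓp_two_iff.1 f.2⟩
  map_add' _ _ := rfl
  map_smul' _ _ := rfl
  norm_map' f := by
    rw [← sq_eq_sq₀ (norm_nonneg _) (norm_nonneg _), norm_sq_eq_tsum, norm_sq_eq_tsum]
    exact e.tsum_eq (fun i => ‖f i‖ ^ 2)

@[simp] theorem compEquiv_apply (e : κ ≃ ι) (f : ℓ²(ι, E)) (k : κ) :
    compEquiv (𝕜 := 𝕜) e f k = f (e k) := rfl

noncomputable def extendZero {e : κ → ι} (he : e.Injective) : ℓ²(κ, E) →ₗᵢ[𝕜] ℓ²(ι, E) where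
  toFun f := ⟨Function.extend e f 0, memℓp_two_iff.2 <| by
    rw [norm_sq_extend_zero]
    exact (summable_extend_zero he).2 (memℓp_two_iff.1 f.2)⟩
  map_add' f g := by
    ext i
    by_cases hi : ∃ k, e k = i
    · obtain ⟨k, rfl⟩ := hi
      simp only [coeFn_add, Pi.add_apply, he.extend_apply]
    · simp only [coeFn_add, Pi.add_apply, Function.extend_apply' _ _ _ hi, Pi.zero_apply,
        add_zero]
  map_smul' c f := by
    ext i
    by_cases hi : ∃ k, e k = i
    · obtain ⟨k, rfl⟩ := hi
      simp only [coeFn_smul, Pi.smul_apply, he.extend_apply, RingHom.id_apply]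
    · simp only [coeFn_smul, Pi.smul_apply, Function.extend_apply' _ _ _ hi, Pi.zero_apply,
        smul_zero]
  norm_map' f := by
    rw [← sq_eq_sq₀ (norm_nonneg _) (norm_nonneg _), norm_sq_eq_tsum, norm_sq_eq_tsum]
    exact (congrArg tsum (norm_sq_extend_zero _)).trans (tsum_extend_zero he _)

variable {e : κ → ι} (he : e.Injective)

@[simp] theorem extendZero_apply_self (f : ℓ²(κ, E)) (k : κ) :
    extendZero (𝕜 := 𝕜) he f (e k) = f k :=
  he.extend_apply _ _ _

theorem extendZero_apply_of_forall_ne (f : ℓ²(κ, E)) {i : ι} (hi : ∀ k, e k ≠ i) :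
    extendZero (𝕜 := 𝕜) he f i = 0 :=
  Function.extend_apply' _ _ _ (not_exists.2 hi)

end

section

variable {G 𝕜 : Type*} [AddCommGroup G] [RCLike 𝕜]

noncomputable def translate (d : G) : ℓ²(G, 𝕜) →ₗᵢ[𝕜] ℓ²(G, 𝕜) :=
  compEquiv (Equiv.subRight d)

theorem translate_apply (d : G) (f : ℓ²(G, 𝕜)) (k : G) : translate d f k = f (k - d) := rfl

theorem translate_translate (a b : G) (f : ℓ²(G, 𝕜)) :
    translate a (translate b f) = translate (a + b) f := by
  ext k
  simp only [translate_apply, sub_sub]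

theorem inner_translate_translate (a b : G) (f g : ℓ²(G, 𝕜)) :
    inner 𝕜 (translate a f) (translate b g) = inner 𝕜 (translate (a - b) f) g := by
  rw [← (translate (-b)).inner_map_map, translate_translate, translate_translate, neg_add_cancel,
    neg_add_eq_sub]
  congr
  ext k
  simp [translate_apply]

theorem eq_zero_of_orthonormal_translate {U V : ℓ²(G, 𝕜)}
    (hU : Orthonormal 𝕜 fun g => translate g U) (hV : ∀ g, inner 𝕜 (translate g U) V = 0) :
    V = 0 := by
  -- `∑ c_g • τ_g U` has `n`-th coordinate `⟪V, τ_{-n} U⟫ = 0`, but norm `‖c‖ = ‖V‖`.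
  set c : ℓ²(G, 𝕜) := star (compEquiv (𝕜 := 𝕜) (Equiv.neg G) V)
  set Q := hU.orthogonalFamily.linearIsometry c
  have hQ : Q = 0 := by
    ext n
    have hsum := (hU.orthogonalFamily.hasSum_linearIsometry c).mapL (evalCLM 𝕜 _ 2 n)
    have hzero := lp.hasSum_inner (𝕜 := 𝕜) V (translate (-n) U)
    rw [← inner_conj_symm, hV, map_zero, ← (Equiv.neg G).hasSum_iff] at hzero
    refine hsum.unique (hzero.congr_fun fun g => ?_)
    simp [c, translate_apply, evalCLM, sub_eq_add_neg, mul_comm, add_comm]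
  rw [← norm_eq_zero]
  calc ‖V‖ = ‖c‖ := by simp [c, norm_star]
    _ = ‖Q‖ := (LinearIsometry.norm_map _ _).symm
    _ = 0 := by rw [hQ, norm_zero]

end

end lp

theorem LinearIsometry.orthonormal_pow_apply {𝕜 E : Type*} [RCLike 𝕜] [NormedAddCommGroup E]
    [InnerProductSpace 𝕜 E] (T : E →ₗᵢ[𝕜] E) {u : E} (hu : ‖u‖ = 1)
    (h : ∀ j, 0 < j → inner 𝕜 u ((T ^ j) u) = 0) : Orthonormal 𝕜 fun n => (T ^ n) u := by
  have hlt : ∀ m n, m < n → inner 𝕜 ((T ^ m) u) ((T ^ n) u) = 0 := by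
    intro m n hmn
    obtain ⟨j, rfl⟩ := Nat.exists_eq_add_of_lt hmn
    rw [add_assoc, pow_add, LinearIsometry.coe_mul, Function.comp_apply,
      LinearIsometry.inner_map_map]
    exact h _ (Nat.succ_pos j)
  refine ⟨fun n => by rw [LinearIsometry.norm_map, hu], fun m n hmn => ?_⟩
  rcases hmn.lt_or_gt with hmn | hnm
  · exact hlt m n hmn
  · exact inner_eq_zero_symm.1 (hlt n m hnm)

theorem coe_shiftL2 (w : ℓ²(ℕ, ℂ)) : ⇑(shiftL2 w) = shiftSeq w := rfl

@[simp] theorem shiftL2_apply_zero (w : ℓ²(ℕ, ℂ)) : shiftL2 w 0 = 0 := rfl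

@[simp] theorem shiftL2_apply_succ (w : ℓ²(ℕ, ℂ)) (n : ℕ) : shiftL2 w (n + 1) = w n := rfl

theorem norm_shiftL2 (w : ℓ²(ℕ, ℂ)) : ‖shiftL2 w‖ = ‖w‖ := by
  rw [← sq_eq_sq₀ (norm_nonneg _) (norm_nonneg _), lp.norm_sq_eq_tsum, lp.norm_sq_eq_tsum,
    (memℓp_two_iff.1 (shiftL2 w).2).tsum_eq_zero_add]
  simp

noncomputable def shiftₗᵢ : ℓ²(ℕ, ℂ) →ₗᵢ[ℂ] ℓ²(ℕ, ℂ) where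
  toFun := shiftL2
  map_add' _ _ := by
    ext (_ | n) <;> simp
  map_smul' _ _ := by
    ext (_ | n) <;> simp
  norm_map' := norm_shiftL2

@[simp] theorem shiftₗᵢ_apply (w : ℓ²(ℕ, ℂ)) : shiftₗᵢ w = shiftL2 w := rfl

theorem shiftₗᵢ_pow_apply (n : ℕ) (w : ℓ²(ℕ, ℂ)) (k : ℕ) :
    (shiftₗᵢ ^ n) w k = if k < n then 0 else w (k - n) := by
  induction n generalizing k with
  | zero => simp
  | succ n ih =>
    rw [pow_succ', LinearIsometry.coe_mul, Function.comp_apply]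
    cases k with
    | zero => simp
    | succ k => simp [ih, Nat.succ_sub_succ]

noncomputable abbrev natToInt : ℓ²(ℕ, ℂ) →ₗᵢ[ℂ] ℓ²(ℤ, ℂ) :=
  lp.extendZero Nat.cast_injective

theorem natToInt_shiftₗᵢ_pow (n : ℕ) (u : ℓ²(ℕ, ℂ)) :
    natToInt ((shiftₗᵢ ^ n) u) = lp.translate (n : ℤ) (natToInt u) := by
  ext k
  rw [lp.translate_apply]
  rcases lt_or_ge k 0 with hk | hk
  · rw [lp.extendZero_apply_of_forall_ne _ _ (by omega),
      lp.extendZero_apply_of_forall_ne _ _ (by omega)]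
  lift k to ℕ using hk
  rw [lp.extendZero_apply_self, shiftₗᵢ_pow_apply]
  split_ifs with hkn
  · rw [lp.extendZero_apply_of_forall_ne _ _ (by omega)]
  · rw [← Nat.cast_sub (not_lt.1 hkn), lp.extendZero_apply_self]

theorem inner_translate_natToInt (u w : ℓ²(ℕ, ℂ)) (d : ℤ) :
    inner ℂ (lp.translate d (natToInt u)) (natToInt w) =
      inner ℂ ((shiftₗᵢ ^ d.toNat) u) ((shiftₗᵢ ^ (-d).toNat) w) := by
  calc inner ℂ (lp.translate d (natToInt u)) (natToInt w)
      = inner ℂ (lp.translate (d.toNat : ℤ) (natToInt u))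
          (lp.translate ((-d).toNat : ℤ) (natToInt w)) := by
        rw [lp.inner_translate_translate, show (d.toNat : ℤ) - (-d).toNat = d by omega]
    _ = _ := by rw [← natToInt_shiftₗᵢ_pow, ← natToInt_shiftₗᵢ_pow, LinearIsometry.inner_map_map]

theorem eq_zero_of_inner_shiftₗᵢ_pow_eq_zero {u v : ℓ²(ℕ, ℂ)}
    (hu : Orthonormal ℂ fun n => (shiftₗᵢ ^ n) u)
    (hvu : ∀ n, inner ℂ ((shiftₗᵢ ^ n) u) v = 0)
    (huv : ∀ j, 0 < j → inner ℂ u ((shiftₗᵢ ^ j) v) = 0) : v = 0 := by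
  have horth := orthonormal_iff_ite.1 hu
  rw [← map_eq_zero_iff natToInt natToInt.injective]
  refine lp.eq_zero_of_orthonormal_translate (U := natToInt u)
    (orthonormal_iff_ite.2 fun m n => ?_) fun d => ?_
  · rw [lp.inner_translate_translate, inner_translate_natToInt, horth]
    exact if_congr (by omega) rfl rfl
  · rw [inner_translate_natToInt]
    rcases Nat.eq_zero_or_pos (-d).toNat with hd | hd
    · rw [hd]
      exact hvu _
    · rw [show d.toNat = 0 by omega]
      exact huv _ hd

theorem Finset.sum_range_succ_mul_sub_comm {R : Type*} [CommSemiring R] (f g : ℕ → R) (n : ℕ) :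
    ∑ j ∈ range (n + 1), f j * g (n - j) = ∑ j ∈ range (n + 1), g j * f (n - j) := by
  rw [← Nat.sum_antidiagonal_eq_sum_range_succ (fun i j => f i * g j),
    ← Nat.sum_antidiagonal_eq_sum_range_succ (fun i j => g i * f j),
    ← Nat.sum_antidiagonal_swap]
  simp only [Prod.fst_swap, Prod.snd_swap, mul_comm]

section CauchyMul

variable {u : ℓ²(ℕ, ℂ)} (hu : Orthonormal ℂ fun n => (shiftₗᵢ ^ n) u)

noncomputable def cauchyMulₗᵢ : ℓ²(ℕ, ℂ) →ₗᵢ[ℂ] ℓ²(ℕ, ℂ) :=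
  hu.orthogonalFamily.linearIsometry

theorem hasSum_cauchyMulₗᵢ (c : ℓ²(ℕ, ℂ)) :
    HasSum (fun n => c n • (shiftₗᵢ ^ n) u) (cauchyMulₗᵢ hu c) := by
  have h := hu.orthogonalFamily.hasSum_linearIsometry c
  simp only [LinearIsometry.toSpanSingleton_apply] at h
  exact h

theorem cauchyMulₗᵢ_apply (c : ℓ²(ℕ, ℂ)) (k : ℕ) :
    cauchyMulₗᵢ hu c k = ∑ j ∈ Finset.range (k + 1), c j * u (k - j) := by
  refine ((hasSum_cauchyMulₗᵢ hu c).mapL (lp.evalCLM ℂ _ 2 k)).unique ?_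
  simp only [map_smul, lp.evalCLM, LinearMap.mkContinuous_apply, lp.evalₗ_apply, smul_eq_mul,
    shiftₗᵢ_pow_apply]
  have hsupp : ∀ n ∉ Finset.range (k + 1), (c n * if k < n then 0 else u (k - n) : ℂ) = 0 :=
    fun n hn => by rw [if_pos (by simpa using hn), mul_zero]
  have heq : ∑ n ∈ Finset.range (k + 1), (c n * if k < n then 0 else u (k - n)) =
      ∑ n ∈ Finset.range (k + 1), c n * u (k - n) :=
    Finset.sum_congr rfl fun n hn => by rw [if_neg (by simp at hn; omega)]
  exact heq ▸ hasSum_sum_of_ne_finset_zero hsupp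

theorem inner_shiftₗᵢ_pow_cauchyMulₗᵢ (c : ℓ²(ℕ, ℂ)) (n : ℕ) :
    inner ℂ ((shiftₗᵢ ^ n) u) (cauchyMulₗᵢ hu c) = c n := by
  refine ((hasSum_cauchyMulₗᵢ hu c).mapL (innerSL ℂ ((shiftₗᵢ ^ n) u))).unique ?_
  simp only [innerSL_apply_apply, inner_smul_right, orthonormal_iff_ite.1 hu n, mul_ite, mul_one,
    mul_zero]
  exact (hasSum_ite_eq' n (c n)).congr_fun fun m => by split_ifs with h <;> simp [h]

include hu in
theorem conditionC_of_orthonormal_shiftₗᵢ_pow : ConditionC u := by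
  intro a ha
  let c : ℓ²(ℕ, ℂ) := ⟨a, memℓp_two_iff.2 ha⟩
  have h := lp.norm_sq_eq_tsum (cauchyMulₗᵢ hu c)
  rw [LinearIsometry.norm_map, lp.norm_sq_eq_tsum] at h
  simp only [cauchyMulₗᵢ_apply] at h
  exact h.symm

end CauchyMul

theorem sum_range_mul_shiftSeq (f g : ℕ → ℂ) (n : ℕ) :
    ∑ k ∈ Finset.range (n + 1), f k * shiftSeq g (n - k) =
      shiftSeq (fun m => ∑ k ∈ Finset.range (m + 1), f k * g (m - k)) n := by
  cases n with
  | zero => simp [shiftSeq]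
  | succ n =>
    rw [Finset.sum_range_succ, Nat.sub_self, shiftSeq, mul_zero, add_zero, shiftSeq]
    refine Finset.sum_congr rfl fun k hk => ?_
    rw [show n + 1 - k = n - k + 1 by simp at hk; omega, shiftSeq]

section InvariantSubspace

variable {M : Submodule ℂ ℓ²(ℕ, ℂ)}

theorem shiftₗᵢ_pow_mem (hS : ∀ w ∈ M, shiftL2 w ∈ M) (n : ℕ) {w : ℓ²(ℕ, ℂ)} (hw : w ∈ M) :
    (shiftₗᵢ ^ n) w ∈ M := by
  induction n with
  | zero => exact hw
  | succ n ih => rw [pow_succ', LinearIsometry.coe_mul, Function.comp_apply]; exact hS _ ih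

theorem eq_bot_of_map_shiftₗᵢ_eq (hM : M.map shiftₗᵢ.toLinearMap = M) : M = ⊥ := by
  have hdiv : ∀ n, ∀ w ∈ M, ∃ y ∈ M, (shiftₗᵢ ^ n) y = w := by
    intro n
    induction n with
    | zero => exact fun w hw => ⟨w, hw, rfl⟩
    | succ n ih =>
      intro w hw
      obtain ⟨z, hz, rfl⟩ := ih w hw
      rw [← hM] at hz
      obtain ⟨y, hy, rfl⟩ := hz
      exact ⟨y, hy, by rw [pow_succ, LinearIsometry.coe_mul, Function.comp_apply]; rfl⟩
  refine (Submodule.eq_bot_iff M).2 fun w hw => ?_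
  ext k
  obtain ⟨y, -, rfl⟩ := hdiv (k + 1) w hw
  simp [shiftₗᵢ_pow_apply]

theorem exists_unit_mem_orthogonal_map_shiftₗᵢ (hM : IsClosed (M : Set ℓ²(ℕ, ℂ)))
    (hS : ∀ w ∈ M, shiftL2 w ∈ M) (hM_ne_bot : M ≠ ⊥) :
    ∃ l ∈ M, ‖l‖ = 1 ∧ ∀ w ∈ M, inner ℂ l (shiftL2 w) = 0 := by
  set K := M.map shiftₗᵢ.toLinearMap
  have hK : IsComplete (K : Set ℓ²(ℕ, ℂ)) := by
    rw [Submodule.map_coe]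
    exact (isComplete_image_iff shiftₗᵢ.isometry.isUniformInducing).2 hM.isComplete
  have : CompleteSpace K := hK.completeSpace_coe
  have hKM : K ≤ M := by
    rintro _ ⟨w, hw, rfl⟩
    exact hS w hw
  obtain ⟨x, ⟨hxK, hxM⟩, hx⟩ : ∃ x ∈ Kᗮ ⊓ M, x ≠ 0 := by
    by_contra! h
    refine hM_ne_bot (eq_bot_of_map_shiftₗᵢ_eq ?_)
    simpa [(Submodule.eq_bot_iff _).2 h] using
      Submodule.sup_orthogonal_inf_of_hasOrthogonalProjection hKM
  refine ⟨(‖x‖⁻¹ : ℂ) • x, M.smul_mem _ hxM, norm_smul_inv_norm hx, fun w hw => ?_⟩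
  rw [inner_smul_left, (Submodule.mem_orthogonal' K x).1 hxK (shiftL2 w) ⟨w, hw, rfl⟩, mul_zero]

theorem inner_shiftₗᵢ_pow_eq_zero_of_orthogonal (hS : ∀ w ∈ M, shiftL2 w ∈ M) {u : ℓ²(ℕ, ℂ)}
    (hu_orth : ∀ w ∈ M, inner ℂ u (shiftL2 w) = 0) {w : ℓ²(ℕ, ℂ)} (hw : w ∈ M) {j : ℕ}
    (hj : 0 < j) : inner ℂ u ((shiftₗᵢ ^ j) w) = 0 := by
  obtain ⟨m, rfl⟩ := Nat.exists_eq_add_one_of_ne_zero hj.ne'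
  rw [pow_succ', LinearIsometry.coe_mul, Function.comp_apply]
  exact hu_orth _ (shiftₗᵢ_pow_mem hS m hw)

variable (hM : IsClosed (M : Set ℓ²(ℕ, ℂ))) (hS : ∀ w ∈ M, shiftL2 w ∈ M) {u : ℓ²(ℕ, ℂ)}
  (hu : Orthonormal ℂ fun n => (shiftₗᵢ ^ n) u) (huM : u ∈ M)
include hM hS huM

theorem cauchyMulₗᵢ_mem (c : ℓ²(ℕ, ℂ)) : cauchyMulₗᵢ hu c ∈ M :=
  hM.mem_of_tendsto (hasSum_cauchyMulₗᵢ hu c) <| Filter.Eventually.of_forall fun _ =>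
    M.sum_mem fun n _ => M.smul_mem _ (shiftₗᵢ_pow_mem hS n huM)

theorem mem_iff_exists_cauchyMulₗᵢ_eq (hu_orth : ∀ w ∈ M, inner ℂ u (shiftL2 w) = 0)
    {w : ℓ²(ℕ, ℂ)} : w ∈ M ↔ ∃ c, cauchyMulₗᵢ hu c = w := by
  refine ⟨fun hw => ?_, fun ⟨c, hc⟩ => hc ▸ cauchyMulₗᵢ_mem hM hS hu huM c⟩
  let c : ℓ²(ℕ, ℂ) := ⟨fun n => inner ℂ ((shiftₗᵢ ^ n) u) w,
    memℓp_two_iff.2 (hu.inner_products_summable w)⟩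
  have hr : w - cauchyMulₗᵢ hu c ∈ M := M.sub_mem hw (cauchyMulₗᵢ_mem hM hS hu huM c)
  refine ⟨c, (sub_eq_zero.1 (eq_zero_of_inner_shiftₗᵢ_pow_eq_zero hu (fun n => ?_)
    fun j hj => inner_shiftₗᵢ_pow_eq_zero_of_orthogonal hS hu_orth hr hj)).symm⟩
  rw [inner_sub_right, inner_shiftₗᵢ_pow_cauchyMulₗᵢ, sub_self]

end InvariantSubspace

theorem beurling_l2_general (M : Submodule ℂ (lp (fun _ : ℕ => ℂ) 2))
    (hM_closed : IsClosed (M : Set (lp (fun _ : ℕ => ℂ) 2)))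
    (hM_ne_bot : M ≠ ⊥) :
    (∀ w ∈ M, shiftL2 w ∈ M) ↔
      ∃ l : lp (fun _ : ℕ => ℂ) 2, l ∈ M ∧ ConditionC (⇑l) ∧
        ∀ w : lp (fun _ : ℕ => ℂ) 2,
          w ∈ M ↔ ∃ c : lp (fun _ : ℕ => ℂ) 2,
            ∀ n : ℕ, w n = ∑ k ∈ Finset.range (n + 1), l k * c (n - k) := by
  constructor
  · intro hS
    obtain ⟨l, hlM, hl, hl_orth⟩ := exists_unit_mem_orthogonal_map_shiftₗᵢ hM_closed hS hM_ne_bot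
    have hu := shiftₗᵢ.orthonormal_pow_apply hl fun j hj =>
      inner_shiftₗᵢ_pow_eq_zero_of_orthogonal hS hl_orth hlM hj
    refine ⟨l, hlM, conditionC_of_orthonormal_shiftₗᵢ_pow hu, fun w => ?_⟩
    rw [mem_iff_exists_cauchyMulₗᵢ_eq hM_closed hS hu hlM hl_orth]
    simp only [lp.ext_iff, funext_iff, cauchyMulₗᵢ_apply, Finset.sum_range_succ_mul_sub_comm,
      eq_comm]
  · rintro ⟨l, -, -, hM⟩ w hw
    obtain ⟨c, hc⟩ := (hM w).1 hw
    refine (hM _).2 ⟨shiftL2 c, fun n => ?_⟩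
    rw [coe_shiftL2, coe_shiftL2, sum_range_mul_shiftSeq, ← funext hc]

/-- Sequential form of Beurling's theorem: a closed nontrivial proper subspace `M` of
`ℓ²` is invariant under the shift iff there is a sequence `λ ∈ M` satisfying
condition (c) such that `M` consists exactly of the Cauchy products of `λ` with
`ℓ²` sequences. -/
theorem beurling_l2 (M : Submodule ℂ (lp (fun _ : ℕ => ℂ) 2))
    (hM_closed : IsClosed (M : Set (lp (fun _ : ℕ => ℂ) 2)))
    (hM_ne_bot : M ≠ ⊥) (hM_ne_top : M ≠ ⊤) :
    (∀ w ∈ M, shiftL2 w ∈ M) ↔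
      ∃ l : lp (fun _ : ℕ => ℂ) 2, l ∈ M ∧ ConditionC (⇑l) ∧
        ∀ w : lp (fun _ : ℕ => ℂ) 2,
          w ∈ M ↔ ∃ c : lp (fun _ : ℕ => ℂ) 2,
            ∀ n : ℕ, w n = ∑ k ∈ Finset.range (n + 1), l k * c (n - k) :=
  beurling_l2_general M hM_closed hM_ne_bot
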